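/- In the OV-graph built from vector sets A, B ⊆ {0,1}^d (with a vertex for each vector in A and B, a vertex c_i for each coordinate i, and an edge between a vector-vertex v and c_i iff v[i] = 1), a pair a ∈ A, b ∈ B is orthogonal (i.e., there is no coordinate i with a[i] = b[i] = 1) if and only if the graph distance d(a, b) > 2. -/

import Mathlib

/-- The OV-graph: vertices are the vectors of `A` (indexed by `Fin n`), the vectors of `B`
(indexed by `Fin m`) and the coordinate vertices `c_1, …, c_d`; a vector-vertex is adjacent
to `c_k` iff its `k`-th coordinate is `1`. -/
def OVGraph {n m d : ℕ} (a : Fin n → Fin d → Bool) (b : Fin m → Fin d → Bool) :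
    SimpleGraph ((Fin n ⊕ Fin m) ⊕ Fin d) :=
  SimpleGraph.fromRel fun u v =>
    match u, v with
    | Sum.inl (Sum.inl i), Sum.inr k => a i k
    | Sum.inl (Sum.inr j), Sum.inr k => b j k
    | _, _ => False

namespace OVGraph

variable {n m d : ℕ} (a : Fin n → Fin d → Bool) (b : Fin m → Fin d → Bool)

theorem not_adj_inl_inl (x y : Fin n ⊕ Fin m) : ¬(OVGraph a b).Adj (.inl x) (.inl y) := by
  rcases x with x | x <;> rcases y with y | y <;> simp [OVGraph]

theorem adj_inl_inl_inr (i : Fin n) (k : Fin d) :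
    (OVGraph a b).Adj (.inl (.inl i)) (.inr k) ↔ a i k := by
  simp [OVGraph]

theorem adj_inl_inr_inr (j : Fin m) (k : Fin d) :
    (OVGraph a b).Adj (.inl (.inr j)) (.inr k) ↔ b j k := by
  simp [OVGraph]

theorem commonNeighbors_eq_empty_iff (i : Fin n) (j : Fin m) :
    (OVGraph a b).commonNeighbors (.inl (.inl i)) (.inl (.inr j)) = ∅ ↔
      ∀ k, ¬(a i k ∧ b j k) := by
  simp only [Set.eq_empty_iff_forall_notMem, SimpleGraph.mem_commonNeighbors, Sum.forall,
    not_adj_inl_inl, false_and, not_false_eq_true, implies_true, true_and, adj_inl_inl_inr,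
    adj_inl_inr_inr]

end OVGraph

theorem stmt0_general {n m d : ℕ} (a : Fin n → Fin d → Bool) (b : Fin m → Fin d → Bool)
    (i : Fin n) (j : Fin m) :
    (∀ k, ¬(a i k ∧ b j k)) ↔
      2 < (OVGraph a b).edist (Sum.inl (Sum.inl i)) (Sum.inl (Sum.inr j)) := by
  rw [SimpleGraph.two_lt_edist_iff, OVGraph.commonNeighbors_eq_empty_iff]
  simp [OVGraph.not_adj_inl_inl]

/-- A pair `a ∈ A`, `b ∈ B` is orthogonal iff their distance in the OV-graph exceeds 2. -/
theorem stmt0 {n m d : ℕ} (a : Fin n → Fin d → Bool) (b : Fin m → Fin d → Bool)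
    (ha : ∀ i, ∃ k, a i k) (hb : ∀ j, ∃ k, b j k) (i : Fin n) (j : Fin m) :
    (∀ k, ¬(a i k ∧ b j k)) ↔
      2 < (OVGraph a b).edist (Sum.inl (Sum.inl i)) (Sum.inl (Sum.inr j)) :=
  stmt0_general a b i j
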